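/- Let X be a compact metric space and let A be a residually stably finite unital C*-algebra. Then the C*-algebra C(X, A) of continuous A-valued functions on X is residually stably finite. -/

import Mathlib

/-- A unital *-ring is *finite* if `x* x = 1` implies `x x* = 1`. -/
def IsFiniteStarRing (D : Type*) [Ring D] [StarRing D] : Prop :=
  ∀ x : D, star x * x = 1 → x * star x = 1

/-- A unital *-ring is *stably finite* if every matrix algebra `Mₙ(D)` (`n ≥ 1`) is finite. -/
def IsStablyFinite (D : Type*) [Ring D] [StarRing D] : Prop :=
  ∀ n : ℕ, 1 ≤ n → IsFiniteStarRing (Matrix (Fin n) (Fin n) D)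

/-- The quotient of `D` by the two-sided ideal `I` is stably finite.  This is expressed without
constructing the quotient: `Mₙ(D)/Mₙ(I) ≅ Mₙ(D/I)` is finite iff whenever `x* x ≡ 1 (mod Mₙ(I))`
then `x x* ≡ 1 (mod Mₙ(I))`, where `Mₙ(I)` consists of the matrices all of whose entries
lie in `I`. -/
def QuotientIsStablyFinite (D : Type*) [Ring D] [StarRing D] (I : TwoSidedIdeal D) : Prop :=
  ∀ n : ℕ, 1 ≤ n → ∀ x : Matrix (Fin n) (Fin n) D,
    (∀ i j, (star x * x - 1) i j ∈ I) → (∀ i j, (x * star x - 1) i j ∈ I)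

/-- A unital C*-algebra is *residually stably finite* if its quotient by every closed two-sided
ideal is stably finite. -/
def IsResiduallyStablyFinite (D : Type*) [Ring D] [StarRing D] [TopologicalSpace D] : Prop :=
  ∀ I : TwoSidedIdeal D, IsClosed (I : Set D) → QuotientIsStablyFinite D I

/-!
A closed ideal `I` of `C(X, A)` is the intersection over `x ∈ X` of the preimages, under
evaluation at `x`, of the closed ideals `I_x = closure {g x | g ∈ I}` of `A`: a function whose
values lie in the `I_x` is approximated by elements of `I` glued from local approximants with a
partition of unity. Stable finiteness of a quotient passes to preimages under *-homomorphisms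
and to intersections of ideals, so `C(X, A) / I` is stably finite because every `A / I_x` is.
-/

open Set

namespace TwoSidedIdeal

section Closure

variable {R : Type*} [Ring R] [TopologicalSpace R] [IsTopologicalRing R]

def topologicalClosure (I : TwoSidedIdeal R) : TwoSidedIdeal R :=
  .mk' (closure (I : Set R)) (subset_closure I.zero_mem)
    (fun ha hb => map_mem_closure₂ continuous_add ha hb fun _ hx _ hy => I.add_mem hx hy)
    (fun ha => map_mem_closure (f := Neg.neg) continuous_neg ha fun _ hx => I.neg_mem hx)
    (fun {a _} hb => map_mem_closure (f := (a * ·)) (continuous_const_mul a) hb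
      fun _ hx => I.mul_mem_left _ _ hx)
    (fun {_ b} ha => map_mem_closure (f := (· * b)) (continuous_mul_const b) ha
      fun _ hx => I.mul_mem_right _ _ hx)

@[simp]
lemma coe_topologicalClosure (I : TwoSidedIdeal R) :
    (I.topologicalClosure : Set R) = closure I :=
  coe_mk' _ _ _ _ _ _

lemma isClosed_topologicalClosure (I : TwoSidedIdeal R) :
    IsClosed (I.topologicalClosure : Set R) := by
  rw [coe_topologicalClosure]
  exact isClosed_closure

end Closure

lemma coe_map_of_surjective {R S : Type*} [Ring R] [Ring S] {f : R →+* S}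
    (hf : Function.Surjective f) (I : TwoSidedIdeal R) : (I.map f : Set S) = f '' I := by
  let J : TwoSidedIdeal S := .mk' (f '' I) ⟨0, I.zero_mem, map_zero f⟩
    (by rintro _ _ ⟨a, ha, rfl⟩ ⟨b, hb, rfl⟩; exact ⟨a + b, I.add_mem ha hb, map_add f a b⟩)
    (by rintro _ ⟨a, ha, rfl⟩; exact ⟨-a, I.neg_mem ha, map_neg f a⟩)
    (by
      rintro s _ ⟨b, hb, rfl⟩
      obtain ⟨r, rfl⟩ := hf s
      exact ⟨r * b, I.mul_mem_left _ _ hb, map_mul f r b⟩)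
    (by
      rintro _ s ⟨a, ha, rfl⟩
      obtain ⟨r, rfl⟩ := hf s
      exact ⟨a * r, I.mul_mem_right _ _ ha, map_mul f a r⟩)
  have hJ : (J : Set S) = f '' I := coe_mk' _ _ _ _ _ _
  have hmap : I.map f ≤ J := span_le.2 hJ.ge
  exact subset_antisymm (hJ ▸ SetLike.coe_subset_coe.2 hmap) subset_span

end TwoSidedIdeal

namespace QuotientIsStablyFinite

variable {R S : Type*} [Ring R] [StarRing R] [Ring S] [StarRing S]

theorem comap {J : TwoSidedIdeal S} (hJ : QuotientIsStablyFinite S J) (φ : R →+* S)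
    (hφ : ∀ r, φ (star r) = star (φ r)) : QuotientIsStablyFinite R (J.comap φ) := by
  intro n hn x hx i j
  have map_star : ∀ M : Matrix (Fin n) (Fin n) R, φ.mapMatrix (star M) = star (φ.mapMatrix M) :=
    fun M => by ext; simp [hφ]
  have map_entry : ∀ (M : Matrix (Fin n) (Fin n) R) i j, φ (M i j) = φ.mapMatrix M i j :=
    fun _ _ _ => rfl
  have hx' : ∀ i j, (star (φ.mapMatrix x) * φ.mapMatrix x - 1) i j ∈ J := fun i j => by
    simpa only [TwoSidedIdeal.mem_comap, map_entry, map_sub, map_mul, map_one, map_star]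
      using hx i j
  rw [TwoSidedIdeal.mem_comap, map_entry, map_sub, map_mul, map_one, map_star]
  exact hJ n hn _ hx' i j

theorem iInf {ι : Type*} {J : ι → TwoSidedIdeal R} (hJ : ∀ k, QuotientIsStablyFinite R (J k)) :
    QuotientIsStablyFinite R (⨅ k, J k) := by
  intro n hn x hx i j
  rw [TwoSidedIdeal.mem_iInf]
  exact fun k => hJ k n hn x (fun a b => (TwoSidedIdeal.mem_iInf R).1 (hx a b) k) i j

end QuotientIsStablyFinite

namespace ContinuousMap

variable {X A : Type*} [TopologicalSpace X]

def evalRingHom [Ring A] [TopologicalSpace A] [IsTopologicalRing A] (x : X) : C(X, A) →+* A where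
  toFun f := f x
  map_one' := rfl
  map_mul' _ _ := rfl
  map_zero' := rfl
  map_add' _ _ := rfl

lemma evalRingHom_surjective [Ring A] [TopologicalSpace A] [IsTopologicalRing A] (x : X) :
    Function.Surjective (evalRingHom (A := A) x) :=
  fun a => ⟨const X a, rfl⟩

variable [CompactSpace X] [T2Space X] [NormedRing A] [NormedAlgebra ℝ A]

theorem exists_mem_dist_le_of_forall_exists {I : TwoSidedIdeal C(X, A)} {f : C(X, A)} {ε : ℝ}
    (hε : 0 ≤ ε) (hf : ∀ x, ∃ g ∈ I, dist (f x) (g x) < ε) : ∃ h ∈ I, dist f h ≤ ε := by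
  choose g hgI hg using hf
  let U : X → Set X := fun x => {y | dist (f y) (g x y) < ε}
  have hUo : ∀ x, IsOpen (U x) := fun x => isOpen_lt (by fun_prop) continuous_const
  obtain ⟨t, ht⟩ := isCompact_univ.elim_finite_subcover U hUo fun x _ => mem_iUnion.2 ⟨x, hg x⟩
  obtain ⟨φ, hφ⟩ := PartitionOfUnity.exists_isSubordinate isClosed_univ (fun i : t => U i)
    (fun i => hUo i) (by simpa [iUnion_subtype] using ht)
  refine ⟨∑ i, (φ i : C(X, ℝ)) • g i, sum_mem fun i _ => ?_, ?_⟩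
  · have hsmul : (φ i : C(X, ℝ)) • g i = ((φ i : C(X, ℝ)) • 1) * g i := by ext; simp
    rw [hsmul]
    exact I.mul_mem_left _ _ (hgI i)
  · rw [ContinuousMap.dist_le hε]
    intro y
    have hy : ∑ᶠ i, φ i y • g i y ∈ Metric.ball (f y) ε :=
      φ.finsum_smul_mem_convex (mem_univ y) (fun i hi => ?_) (convex_ball _ _)
    · rw [finsum_eq_sum_of_fintype, Metric.mem_ball'] at hy
      simpa [smul_apply'] using hy.le
    · exact Metric.mem_ball'.2 (hφ i (subset_closure hi))

theorem mem_closure_of_forall_mem_closure_image_evalRingHom {I : TwoSidedIdeal C(X, A)}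
    {f : C(X, A)} (hf : ∀ x, f x ∈ closure (evalRingHom x '' (I : Set C(X, A)))) :
    f ∈ closure (I : Set C(X, A)) := by
  refine Metric.mem_closure_iff.2 fun ε hε => ?_
  obtain ⟨h, hI, hd⟩ := exists_mem_dist_le_of_forall_exists (half_pos hε).le fun x => by
    obtain ⟨_, ⟨g, hg, rfl⟩, hd⟩ := Metric.mem_closure_iff.1 (hf x) (ε / 2) (half_pos hε)
    exact ⟨g, hg, hd⟩
  exact ⟨h, hI, hd.trans_lt (half_lt_self hε)⟩

theorem iInf_comap_topologicalClosure_map_evalRingHom {I : TwoSidedIdeal C(X, A)}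
    (hI : IsClosed (I : Set C(X, A))) :
    ⨅ x, ((I.map (evalRingHom x)).topologicalClosure).comap (evalRingHom x) = I := by
  refine le_antisymm (fun f hf => ?_) (le_iInf fun x g hg => ?_)
  · rw [← SetLike.mem_coe, ← hI.closure_eq]
    refine mem_closure_of_forall_mem_closure_image_evalRingHom fun x => ?_
    have hfx := (TwoSidedIdeal.mem_iInf _).1 hf x
    rwa [TwoSidedIdeal.mem_comap, ← SetLike.mem_coe, TwoSidedIdeal.coe_topologicalClosure,
      TwoSidedIdeal.coe_map_of_surjective (evalRingHom_surjective x)] at hfx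
  · rw [TwoSidedIdeal.mem_comap, ← SetLike.mem_coe, TwoSidedIdeal.coe_topologicalClosure]
    exact subset_closure (TwoSidedIdeal.subset_span ⟨g, hg, rfl⟩)

end ContinuousMap

theorem residuallyStablyFinite_continuousMap (X : Type*) [MetricSpace X] [CompactSpace X]
    (A : Type*) [CStarAlgebra A] (hA : IsResiduallyStablyFinite A) :
    IsResiduallyStablyFinite C(X, A) := by
  intro I hI
  rw [← ContinuousMap.iInf_comap_topologicalClosure_map_evalRingHom hI]
  exact QuotientIsStablyFinite.iInf fun x =>
    (hA _ (TwoSidedIdeal.isClosed_topologicalClosure _)).comap _ fun _ => rfl
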